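/- arXiv:1111.1224 — 5 statements merged into one kernel-verified Lean document; each statement's English description precedes it below -/
import Mathlib

section
/- Let f ∈ F_q[x] have degree d > 0. For each i ≥ 1, let N_i be the number of tuples (x_1, ..., x_i) ∈ F_q^i with f(x_1) = f(x_2) = ... = f(x_i). Then |V_f| = Σ_{i=1}^d (−1)^{i−1} N_i σ_i(1, 1/2, ..., 1/d), where σ_i is the i-th elementary symmetric polynomial in d variables evaluated at (1, 1/2, ..., 1/d) in the rationals, and the equality is between the natural number |V_f| cast into the rationals and the rational-valued right-hand side. -/
open Polynomial Finset

/-!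
If the value `v` is taken `m_v` times, then `1 ≤ m_v ≤ d`, so the product `∏_{j=1}^d (1 - m_v / j)`
has a vanishing factor. Expanding it in elementary symmetric functions gives
`1 = ∑_{i=1}^d (-1)^(i-1) m_v^i σ_i(1, 1/2, …, 1/d)`, and summing over `v ∈ V_f` turns `∑_v m_v^i`
into `N_i`.
-/

namespace Multiset

theorem prod_map_one_add_mul_eq_sum_esymm {R : Type*} [CommSemiring R] (s : Multiset R) (t : R) :
    (s.map fun r => 1 + t * r).prod = ∑ j ∈ Finset.range (card s + 1), t ^ j * s.esymm j := by
  have h := congrArg (eval 1) (prod_X_add_C_eq_sum_esymm (s.map (t * ·)))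
  simp only [eval_multiset_prod, map_map, Function.comp_def, eval_add, eval_X, eval_C,
    eval_finsetSum, eval_mul, eval_pow, one_pow, mul_one, card_map] at h
  rw [h]
  refine sum_congr rfl fun j _ => ?_
  simpa only [smul_eq_mul] using (pow_smul_esymm t j s).symm

theorem sum_Icc_neg_one_pow_mul_pow_mul_esymm_eq_one {R : Type*} [CommRing R] {s : Multiset R}
    {m r : R} (hr : r ∈ s) (hmr : m * r = 1) :
    ∑ i ∈ Finset.Icc 1 (card s), (-1) ^ (i - 1) * m ^ i * s.esymm i = 1 := by
  have hprod : (s.map fun r => 1 + -m * r).prod = 0 :=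
    prod_eq_zero (mem_map.mpr ⟨r, hr, by rw [neg_mul, hmr, add_neg_cancel]⟩)
  rw [prod_map_one_add_mul_eq_sum_esymm, range_eq_Ico, sum_eq_sum_Ico_succ_bot (by omega),
    pow_zero, Finset.Ico_add_one_right_eq_Icc, esymm, powersetCard_zero_left] at hprod
  simp only [map_singleton, prod_zero, sum_singleton, mul_one] at hprod
  have hsign : ∑ i ∈ Finset.Icc 1 (card s), (-1) ^ (i - 1) * m ^ i * s.esymm i =
      -∑ i ∈ Finset.Icc 1 (card s), (-m) ^ i * s.esymm i := by
    rw [← sum_neg_distrib]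
    refine sum_congr rfl fun i hi => ?_
    obtain ⟨k, rfl⟩ : ∃ k, i = k + 1 := ⟨i - 1, by grind [mem_Icc]⟩
    rw [neg_pow, pow_succ, Nat.add_sub_cancel]
    ring
  rw [hsign]
  linear_combination -hprod

end Multiset

theorem one_div_natCast_mem_map_range {m d : ℕ} (hm : 1 ≤ m) (hmd : m ≤ d) :
    (1 : ℚ) / m ∈ (Multiset.range d).map fun j => (1 : ℚ) / (j + 1) := by
  -- `Multiset.range d` is coerced to a `Multiset ℚ` through the monad structure of `Multiset`.
  simp only [Multiset.pure_def, Multiset.bind_def, Multiset.bind_singleton, Multiset.map_map,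
    Function.comp_apply, Multiset.mem_map, Multiset.mem_range]
  exact ⟨m - 1, by omega, by rw [Nat.cast_sub hm, Nat.cast_one, sub_add_cancel]⟩

theorem sum_Icc_neg_one_pow_mul_pow_mul_esymm_harmonic_eq_one {d m : ℕ} (hm : 1 ≤ m)
    (hmd : m ≤ d) :
    ∑ i ∈ Icc 1 d, (-1 : ℚ) ^ (i - 1) * (m : ℚ) ^ i *
      (((Multiset.range d).map fun j => (1 : ℚ) / (j + 1)).esymm i) = 1 := by
  simpa using Multiset.sum_Icc_neg_one_pow_mul_pow_mul_esymm_eq_one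
    (one_div_natCast_mem_map_range hm hmd) (mul_one_div_cancel (by positivity))

theorem card_filter_forall_apply_eq {α β : Type*} [Fintype α] [DecidableEq β] (g : α → β)
    {i : ℕ} (hi : 0 < i) :
    #{x : Fin i → α | ∀ j j', g (x j) = g (x j')} = ∑ v ∈ univ.image g, #{a | g a = v} ^ i := by
  classical
  rw [card_eq_sum_card_fiberwise (f := fun x => g (x ⟨0, hi⟩)) (t := univ.image g)
    fun x _ => mem_image_of_mem g (mem_univ _)]
  refine sum_congr rfl fun v _ => ?_
  rw [filter_filter, ← Fintype.card_piFinset_const]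
  congr 1
  ext x
  simp only [mem_filter, mem_univ, true_and, Fintype.mem_piFinset]
  exact ⟨fun ⟨h, hv⟩ j => (h j _).trans hv, fun h => ⟨fun j j' => (h j).trans (h j').symm, h _⟩⟩

theorem Polynomial.card_filter_eval_eq_le_natDegree {R : Type*} [CommRing R] [IsDomain R]
    [DecidableEq R] {p : R[X]} (hp : 0 < p.natDegree) (s : Finset R) (v : R) :
    #{a ∈ s | p.eval a = v} ≤ p.natDegree := by
  rw [← natDegree_sub_C (a := v)]
  refine card_le_degree_of_subset_roots fun a ha => ?_
  rw [mem_roots_sub_C (natDegree_pos_iff_degree_pos.mp hp)]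
  exact (mem_filter.mp ha).2

theorem value_set_card_eq_alternating_sum (F : Type*) [Field F] [Fintype F] [DecidableEq F]
    (f : F[X]) (hd : 0 < f.natDegree) :
    ((Finset.univ.image fun a => f.eval a).card : ℚ) =
      ∑ i ∈ Finset.Icc 1 f.natDegree,
        (-1 : ℚ) ^ (i - 1) *
          (((Finset.univ : Finset (Fin i → F)).filter
              (fun x => ∀ j j', f.eval (x j) = f.eval (x j'))).card : ℚ) *
          (((Multiset.range f.natDegree).map fun j => (1 : ℚ) / (j + 1)).esymm i) := by
  have fiber_pos : ∀ v ∈ univ.image fun a => f.eval a, 1 ≤ #{a | f.eval a = v} := by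
    intro v hv
    obtain ⟨a, -, rfl⟩ := mem_image.mp hv
    exact card_pos.mpr ⟨a, mem_filter.mpr ⟨mem_univ a, rfl⟩⟩
  calc ((univ.image fun a => f.eval a).card : ℚ)
      = ∑ v ∈ univ.image fun a => f.eval a, ∑ i ∈ Icc 1 f.natDegree, (-1 : ℚ) ^ (i - 1) *
          (#{a | f.eval a = v} : ℚ) ^ i *
          (((Multiset.range f.natDegree).map fun j => (1 : ℚ) / (j + 1)).esymm i) := by
        rw [card_eq_sum_ones, Nat.cast_sum, Nat.cast_one]
        exact sum_congr rfl fun v hv => (sum_Icc_neg_one_pow_mul_pow_mul_esymm_harmonic_eq_one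
          (fiber_pos v hv) (card_filter_eval_eq_le_natDegree hd univ v)).symm
    _ = _ := by
        rw [sum_comm]
        refine sum_congr rfl fun i hi => ?_
        rw [card_filter_forall_apply_eq (fun a => f.eval a) (mem_Icc.mp hi).1, Nat.cast_sum,
          mul_sum, sum_mul]
        simp only [Nat.cast_pow]
end

section
/- If t < (log₂ p)/3 and p/2^t > t(3+√p), and the pattern-count hypothesis from the Weil bound holds, then the map x ↦ (α(x), α(x+1), ..., α(x+t−1)) from F_p to {0,1}^t is surjective, where α(x) = (x^{(p−1)/2} + x^{p−1})/2. -/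
/-!
On nonzero `y`, Euler's criterion gives `y ^ ((p - 1) / 2) = χ y` and Fermat gives `y ^ (p - 1) = 1`,
so `α y = (χ y + 1) / 2`. Hence `x` realises the bit pattern `c` as soon as `χ (x + i) = 2 c i - 1`
for all `i`, and the counting hypothesis says that some `x` has exactly these quadratic characters.
-/

open Finset

section FiniteField

variable {F : Type*} [Field F] [DecidableEq F]

theorem pow_card_sub_one_div_two_add_pow_card_sub_one_div_two [Fintype F] (hF : ringChar F ≠ 2)
    {y : F} (hy : y ≠ 0) :
    (y ^ ((Fintype.card F - 1) / 2) + y ^ (Fintype.card F - 1)) / 2 =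
      ((quadraticChar F y : F) + 1) / 2 := by
  have hodd := FiniteField.odd_card_of_char_ne_two hF
  rw [quadraticChar_eq_pow_of_char_ne_two' hF, FiniteField.pow_card_sub_one_eq_one y hy]
  congr 3
  omega

def bitToSign (c : F) : ℤ := if c = 0 then -1 else 1

theorem bitToSign_eq_one_or_neg_one (c : F) : bitToSign c = 1 ∨ bitToSign c = -1 := by
  unfold bitToSign
  split_ifs <;> simp

theorem bitToSign_ne_zero (c : F) : bitToSign c ≠ 0 := by
  rcases bitToSign_eq_one_or_neg_one c with h | h <;> rw [h] <;> decide

theorem cast_bitToSign_add_one_div_two (h2 : (2 : F) ≠ 0) {c : F} (hc : c = 0 ∨ c = 1) :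
    ((bitToSign c : F) + 1) / 2 = c := by
  rcases hc with rfl | rfl
  · simp [bitToSign]
  · simp [bitToSign, one_add_one_eq_two, h2]

end FiniteField

theorem alpha_shift_map_surjective_general (p : ℕ) [Fact p.Prime] (hp2 : p ≠ 2) (t : ℕ)
    (hweil : ∀ b : Fin t → ℤ, (∀ i, b i = 1 ∨ b i = -1) →
      (p : ℝ) / 2 ^ t - t * (3 + Real.sqrt p) <
        ((Finset.univ.filter fun x : ZMod p =>
            ∀ i : Fin t, quadraticChar (ZMod p) (x + ((i : ℕ) : ZMod p)) = b i).card : ℝ))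
    (hpos : 0 < (p : ℝ) / 2 ^ t - t * (3 + Real.sqrt p)) :
    ∀ c : Fin t → ZMod p, (∀ i, c i = 0 ∨ c i = 1) →
      ∃ x : ZMod p, ∀ i : Fin t,
        ((x + ((i : ℕ) : ZMod p)) ^ ((p - 1) / 2) + (x + ((i : ℕ) : ZMod p)) ^ (p - 1)) / 2 =
          c i := by
  intro c hc
  have hF : ringChar (ZMod p) ≠ 2 := by rwa [ZMod.ringChar_zmod_n]
  obtain ⟨x, hx⟩ : (univ.filter fun x : ZMod p =>
      ∀ i : Fin t, quadraticChar (ZMod p) (x + ((i : ℕ) : ZMod p)) = bitToSign (c i)).Nonempty := by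
    rw [← card_pos, ← Nat.cast_pos (α := ℝ)]
    exact hpos.trans (hweil _ fun i => bitToSign_eq_one_or_neg_one (c i))
  refine ⟨x, fun i => ?_⟩
  have hχ := (mem_filter.mp hx).2 i
  have hy : x + ((i : ℕ) : ZMod p) ≠ 0 := by
    intro h
    exact bitToSign_ne_zero (c i) (by rw [← hχ, h, quadraticChar_zero])
  have hα := pow_card_sub_one_div_two_add_pow_card_sub_one_div_two hF hy
  rw [ZMod.card] at hα
  rw [hα, hχ, cast_bitToSign_add_one_div_two (Ring.two_ne_zero hF) (hc i)]

theorem alpha_shift_map_surjective (p : ℕ) [Fact p.Prime] (hp2 : p ≠ 2) (t : ℕ) (ht : 0 < t)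
    (hweil : ∀ b : Fin t → ℤ, (∀ i, b i = 1 ∨ b i = -1) →
      (p : ℝ) / 2 ^ t - t * (3 + Real.sqrt p) <
        ((Finset.univ.filter fun x : ZMod p =>
            ∀ i : Fin t, quadraticChar (ZMod p) (x + ((i : ℕ) : ZMod p)) = b i).card : ℝ))
    (htlog : (t : ℝ) < Real.logb 2 p / 3)
    (hpos : 0 < (p : ℝ) / 2 ^ t - t * (3 + Real.sqrt p)) :
    ∀ c : Fin t → ZMod p, (∀ i, c i = 0 ∨ c i = 1) →
      ∃ x : ZMod p, ∀ i : Fin t,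
        ((x + ((i : ℕ) : ZMod p)) ^ ((p - 1) / 2) + (x + ((i : ℕ) : ZMod p)) ^ (p - 1)) / 2 =
          c i :=
  alpha_shift_map_surjective_general p hp2 t hweil hpos
end

section
/- Suppose for t natural numbers a_1, ..., a_t and b with b ≤ Σ a_i, and an odd prime p > Σ_{i=1}^t a_i, the polynomial map β : F_p → F_p defined by β(x) = Σ_{i=0}^{t−1} a_{i+1} α(x+i) − b (with a_i and b reduced mod p) has a root in F_p, where α(x) = (x^{(p−1)/2} + x^{p−1})/2. Then there exists a subset T ⊆ {1,...,t} with Σ_{i∈T} a_i = b. -/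
/-!
By Euler's criterion, `α(y) = (y^((p-1)/2) + y^(p-1))/2` is `1` on nonzero squares and `0`
elsewhere, so a root `x` of `β` exhibits `b` modulo `p` as the subset sum of the `a_i` with
`α(x+i) = 1`. Both that subset sum and `b` lie in `[0, p)`, so the congruence is an equality.
-/

open Finset

theorem pow_half_add_pow_div_two_eq_zero_or_one {p : ℕ} [Fact p.Prime] (hp2 : p ≠ 2)
    (y : ZMod p) :
    (y ^ ((p - 1) / 2) + y ^ (p - 1)) / 2 = 0 ∨ (y ^ ((p - 1) / 2) + y ^ (p - 1)) / 2 = 1 := by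
  rcases eq_or_ne y 0 with rfl | hy
  · have hp3 : 3 ≤ p := (Fact.out : p.Prime).two_le.lt_of_ne' hp2
    left
    rw [zero_pow (by omega), zero_pow (by omega), add_zero, zero_div]
  have htwo : (2 : ZMod p) ≠ 0 := Ring.two_ne_zero (by rwa [ZMod.ringChar_zmod_n])
  have hhalf : (p - 1) / 2 = p / 2 := by
    have := Nat.odd_iff.mp ((Fact.out : p.Prime).odd_of_ne_two hp2)
    omega
  rw [hhalf, ZMod.pow_card_sub_one_eq_one hy]
  rcases ZMod.pow_div_two_eq_neg_one_or_one p hy with h | h <;> rw [h]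
  · exact Or.inr (by rw [one_add_one_eq_two, div_self htwo])
  · exact Or.inl (by rw [neg_add_cancel, zero_div])

theorem Finset.exists_sum_natCast_eq_of_zero_or_one {ι R : Type*} [Fintype ι] [Semiring R]
    (a : ι → ℕ) {w : ι → R} (hw : ∀ i, w i = 0 ∨ w i = 1) :
    ∃ T : Finset ι, ∑ i, (a i : R) * w i = ((∑ i ∈ T, a i : ℕ) : R) := by
  classical
  refine ⟨univ.filter (fun i => w i = 1), ?_⟩
  rw [Nat.cast_sum, sum_filter]
  refine sum_congr rfl fun i _ => ?_
  by_cases h : w i = 1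
  · rw [if_pos h, h, mul_one]
  · rw [if_neg h, (hw i).resolve_right h, mul_zero]

theorem ZMod.eq_of_natCast_eq_of_lt {p m n : ℕ} (hm : m < p) (hn : n < p)
    (h : (m : ZMod p) = n) : m = n := by
  rwa [ZMod.natCast_eq_natCast_iff', Nat.mod_eq_of_lt hm, Nat.mod_eq_of_lt hn] at h

theorem root_of_beta_gives_subset_sum (p : ℕ) [Fact p.Prime] (hp2 : p ≠ 2)
    (t : ℕ) (a : Fin t → ℕ) (b : ℕ) (hb : b ≤ ∑ i, a i) (hp : ∑ i, a i < p)
    (hroot : ∃ x : ZMod p,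
      (∑ i : Fin t, (a i : ZMod p) *
          (((x + ((i : ℕ) : ZMod p)) ^ ((p - 1) / 2) +
              (x + ((i : ℕ) : ZMod p)) ^ (p - 1)) / 2)) - (b : ZMod p) = 0) :
    ∃ T : Finset (Fin t), ∑ i ∈ T, a i = b := by
  obtain ⟨x, hx⟩ := hroot
  obtain ⟨T, hT⟩ := exists_sum_natCast_eq_of_zero_or_one a
    fun i : Fin t => pow_half_add_pow_div_two_eq_zero_or_one hp2 (x + ((i : ℕ) : ZMod p))
  have hTle : ∑ i ∈ T, a i ≤ ∑ i, a i := sum_le_sum_of_subset (subset_univ T)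
  refine ⟨T, ZMod.eq_of_natCast_eq_of_lt (hTle.trans_lt hp) (hb.trans_lt hp) ?_⟩
  rw [← hT, ← sub_eq_zero, hx]
end

section
/- Let φ : {0,1}^n → Fin m (a 3SAT instance with n variables and m clauses, m ≥ 1, given as clause evaluation functions C_1, ..., C_m : {0,1}^n → Bool). Define G : {0,1}^n × F_2^m → {0,1}^n × F_2^m by G(x, y) = (x, w) where w_i = y_i + y_{i+1 mod m} if C_i(x) is true and w_i = y_i otherwise. Then for each fixed x, the map y ↦ w is F_2-linear, and it has rank m−1 if all clauses C_i(x) are satisfied and rank m (is bijective) otherwise. -/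
/-!
A vector `y` in the kernel vanishes at every unsatisfied clause `i`, and satisfies
`y (i + 1) = y i` (characteristic two) at every satisfied one. Walking backwards around the
cycle `Fin m`, an unsatisfied clause forces `y = 0`; if all clauses are satisfied it forces `y`
to be constant, so the kernel is the line spanned by the all-ones vector.
-/

open scoped Fin.NatCast Fin.CommRing in
theorem Fin.cyclic_induction_down {m : ℕ} [NeZero m] {P : Fin m → Prop} {a : Fin m} (ha : P a)
    (step : ∀ i, P (i + 1) → P i) (i : Fin m) : P i := by
  have key (k : ℕ) : P (a - k) := by
    induction k with
    | zero => simpa using ha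
    | succ k ih => exact step _ (by rwa [Nat.cast_succ, sub_add_eq_sub_sub, sub_add_cancel])
  simpa using key (a - i).val

section

variable {R : Type*} {m : ℕ} [NeZero m] (s : Fin m → Bool)

variable (R) in
def clauseShift [Semiring R] : (Fin m → R) →ₗ[R] (Fin m → R) :=
  let π (i : Fin m) : (Fin m → R) →ₗ[R] R := LinearMap.proj i
  LinearMap.pi fun i => if s i then π i + π (i + 1) else π i

theorem clauseShift_apply [Semiring R] (y : Fin m → R) (i : Fin m) :
    clauseShift R s y i = if s i then y i + y (i + 1) else y i := by
  simp only [clauseShift, LinearMap.pi_apply]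
  split_ifs <;> rfl

theorem clauseShift_injective_of_exists_false [Ring R] (h : ∃ i, s i = false) :
    Function.Injective (clauseShift R s) := by
  obtain ⟨a, ha⟩ := h
  rw [← LinearMap.ker_eq_bot, LinearMap.ker_eq_bot']
  intro y hy
  have hzero (i : Fin m) : (if s i then y i + y (i + 1) else y i) = 0 := by
    rw [← clauseShift_apply, hy, Pi.zero_apply]
  funext i
  refine Fin.cyclic_induction_down (P := fun i => y i = 0) (a := a) ?_ (fun j hj => ?_) i
  · simpa [ha] using hzero a
  · simpa [hj] using hzero j

theorem clauseShift_bijective_of_exists_false {K : Type*} [Field K] (h : ∃ i, s i = false) :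
    Function.Bijective (clauseShift K s) :=
  have hinj := clauseShift_injective_of_exists_false s h
  ⟨hinj, LinearMap.injective_iff_surjective.mp hinj⟩

theorem ker_clauseShift_of_forall_true [Ring R] [CharP R 2] (h : ∀ i, s i = true) :
    LinearMap.ker (clauseShift R s) = R ∙ (1 : Fin m → R) := by
  apply le_antisymm
  · intro y hy
    have hshift (i : Fin m) : y (i + 1) = y i := by
      have := congrFun (LinearMap.mem_ker.mp hy) i
      rw [clauseShift_apply, if_pos (h i), Pi.zero_apply, add_eq_zero_iff_eq_neg'] at this
      rw [this, CharTwo.neg_eq]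
    have hconst : y = y 0 • 1 := by
      funext i
      simpa using Fin.cyclic_induction_down (P := fun i => y i = y 0) (a := 0) rfl
        (fun j hj => (hshift j).symm.trans hj) i
    exact hconst ▸ Submodule.smul_mem _ _ (Submodule.mem_span_singleton_self _)
  · rw [Submodule.span_le, Set.singleton_subset_iff, SetLike.mem_coe, LinearMap.mem_ker]
    funext i
    simp [clauseShift_apply, h i, CharTwo.add_self_eq_zero]

theorem finrank_range_clauseShift_of_forall_true {K : Type*} [Field K] [CharP K 2]
    (h : ∀ i, s i = true) : Module.finrank K (LinearMap.range (clauseShift K s)) = m - 1 := by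
  have hker : Module.finrank K (LinearMap.ker (clauseShift K s)) = 1 := by
    rw [ker_clauseShift_of_forall_true s h]
    exact finrank_span_singleton one_ne_zero
  have := LinearMap.finrank_range_add_finrank_ker (clauseShift K s)
  rw [hker, Module.finrank_fin_fun] at this
  omega

end

theorem clause_circuit_linear_rank (n m : ℕ) [NeZero m]
    (C : Fin m → (Fin n → Bool) → Bool) (x : Fin n → Bool) :
    ∃ L : (Fin m → ZMod 2) →ₗ[ZMod 2] (Fin m → ZMod 2),
      (∀ y i, L y i = if C i x then y i + y (i + 1) else y i) ∧
      ((∀ i, C i x = true) → Module.finrank (ZMod 2) (LinearMap.range L) = m - 1) ∧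
      ((∃ i, C i x = false) → Function.Bijective L) :=
  ⟨clauseShift (ZMod 2) (C · x), clauseShift_apply _,
    finrank_range_clauseShift_of_forall_true _, clauseShift_bijective_of_exists_false _⟩
end

section
/- With G as above, if M is the number of x ∈ {0,1}^n satisfying all clauses (C_i(x) = true for all i), then the cardinality of the image of G equals 2^{n+m} − 2^{m−1} M. In particular, G is a bijection if and only if M = 0. -/
/-! For fixed `x`, `y ↦ w` is an additive endomorphism of `(ZMod 2)^m`. If some clause fails at
`x`, a kernel element vanishes at that index and hence, walking backwards around the cycle, everywhere:
the map is bijective. If all clauses hold, `w i = y i + y (i + 1)`, whose kernel is the two constant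
vectors, so the image has `2^(m-1)` elements. Summing over `x` gives
`|im G| + 2^(m-1) M = 2^(n+m)`, and `G` is bijective iff its image is everything, i.e. iff `M = 0`. -/

open Finset

theorem AddMonoidHom.card_image_univ_mul_card_ker {G H : Type*} [AddGroup G] [AddGroup H]
    [Fintype G] [DecidableEq H] (f : G →+ H) :
    #(univ.image f) * Nat.card f.ker = Fintype.card G := by
  have hrange : #(univ.image f) = Nat.card f.range := by
    rw [← Set.toFinset_range, Set.toFinset_card, ← Nat.card_eq_fintype_card,
      ← SetLike.coe_sort_coe, AddMonoidHom.coe_range]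
  rw [hrange, ← AddSubgroup.index_ker, mul_comm, AddSubgroup.card_mul_index,
    Nat.card_eq_fintype_card]

theorem Finset.card_image_prodMk_eq_sum {α β γ : Type*} [Fintype α] [Fintype β]
    [DecidableEq α] [DecidableEq γ] (g : α → β → γ) :
    #(univ.image fun p : α × β => (p.1, g p.1 p.2)) = ∑ a, #(univ.image (g a)) := by
  rw [card_eq_sum_card_fiberwise (f := Prod.fst) (t := univ) (fun _ _ => mem_coe.2 (mem_univ _))]
  refine sum_congr rfl fun a _ => ?_
  have hfiber : {p ∈ univ.image fun p : α × β => (p.1, g p.1 p.2) | p.1 = a} =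
      (univ.image (g a)).map ⟨Prod.mk a, Prod.mk_right_injective a⟩ := by
    ext ⟨a', c⟩
    simp only [mem_filter, mem_image, mem_univ, true_and, mem_map, Function.Embedding.coeFn_mk,
      Prod.mk.injEq, Prod.exists]
    constructor
    · rintro ⟨⟨x, y, ⟨rfl, rfl⟩⟩, rfl⟩
      exact ⟨g x y, ⟨y, rfl⟩, rfl, rfl⟩
    · rintro ⟨_, ⟨y, rfl⟩, rfl, rfl⟩
      exact ⟨⟨a, y, rfl, rfl⟩, rfl⟩
  rw [hfiber, card_map]

open Fin.NatCast in
theorem Fin.apply_eq_apply_zero_of_forall_add_one {m : ℕ} [NeZero m] {β : Type*}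
    {y : Fin m → β} (h : ∀ i, y (i + 1) = y i) (i : Fin m) : y i = y 0 := by
  have hnat : ∀ k : ℕ, y k = y 0 := by
    intro k
    induction k with
    | zero => simp
    | succ k ih => rw [Nat.cast_succ, h, ih]
  simpa using hnat i

section cycleMap

variable (A : Type*) [AddCommGroup A] {m : ℕ} [NeZero m]

def cycleMap (c : Fin m → Bool) : (Fin m → A) →+ (Fin m → A) where
  toFun y i := if c i then y i + y (i + 1) else y i
  map_zero' := by ext; simp
  map_add' y z := by ext i; simp only [Pi.add_apply]; split_ifs <;> abel

variable {A}

open Fin.NatCast in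
theorem cycleMap_injective {c : Fin m → Bool} (h : ∃ i, c i = false) :
    Function.Injective (cycleMap A c) := by
  obtain ⟨i₀, hi₀⟩ := h
  refine (injective_iff_map_eq_zero _).2 fun y hy => ?_
  have hyi : ∀ i, (if c i then y i + y (i + 1) else y i) = 0 := fun i => congrFun hy i
  have hvanish : ∀ k : ℕ, y (i₀ - k) = 0 := by
    intro k
    induction k with
    | zero => simpa [hi₀] using hyi i₀
    | succ k ih =>
      have hnext : i₀ - (k + 1 : ℕ) + 1 = i₀ - k := by push_cast; abel
      have := hyi (i₀ - (k + 1 : ℕ))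
      split_ifs at this
      · rwa [hnext, ih, add_zero] at this
      · exact this
  funext j
  simpa using hvanish (i₀ - j).val

theorem ker_cycleMap_of_forall {c : Fin m → Bool} (h : ∀ i, c i = true) :
    (cycleMap (ZMod 2) c).ker = (Pi.constAddMonoidHom (Fin m) (ZMod 2)).range := by
  have hchar : ∀ a b : ZMod 2, a + b = 0 ↔ b = a := by decide
  ext y
  simp only [AddMonoidHom.mem_ker, AddMonoidHom.mem_range, funext_iff, cycleMap,
    AddMonoidHom.coe_mk, ZeroHom.coe_mk, h, if_true, Pi.zero_apply, hchar,
    Pi.constAddMonoidHom_apply, Function.const_apply]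
  exact ⟨fun hy => ⟨y 0, fun i => (Fin.apply_eq_apply_zero_of_forall_add_one hy i).symm⟩,
    fun ⟨a, ha⟩ i => by rw [← ha, ← ha]⟩

theorem card_ker_cycleMap_of_forall {c : Fin m → Bool} (h : ∀ i, c i = true) :
    Nat.card (cycleMap (ZMod 2) c).ker = 2 := by
  rw [ker_cycleMap_of_forall h, ← Nat.card_congr
    (AddMonoidHom.ofInjective (f := Pi.constAddMonoidHom (Fin m) (ZMod 2))
      Function.const_injective).toEquiv, Nat.card_zmod]

theorem card_image_cycleMap_add_ite (c : Fin m → Bool) :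
    #(univ.image (cycleMap (ZMod 2) c)) + (if ∀ i, c i = true then 2 ^ (m - 1) else 0) =
      2 ^ m := by
  split_ifs with h
  · have hker := (cycleMap (ZMod 2) c).card_image_univ_mul_card_ker
    rw [card_ker_cycleMap_of_forall h, Fintype.card_fun, ZMod.card, Fintype.card_fin,
      ← pow_sub_one_mul (NeZero.ne m)] at hker
    rw [Nat.eq_of_mul_eq_mul_right two_pos hker, ← two_mul, ← pow_succ',
      Nat.sub_add_cancel NeZero.one_le]
  · rw [card_image_of_injective _ (cycleMap_injective (by simpa using h)), card_univ,
      Fintype.card_fun, ZMod.card, Fintype.card_fin, add_zero]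

end cycleMap

theorem circuit_image_card (n m : ℕ) [NeZero m]
    (C : Fin m → (Fin n → Bool) → Bool) :
    let G : (Fin n → Bool) × (Fin m → ZMod 2) → (Fin n → Bool) × (Fin m → ZMod 2) :=
      fun xy => (xy.1, fun i => if C i xy.1 then xy.2 i + xy.2 (i + 1) else xy.2 i)
    let M := (Finset.univ.filter fun x : Fin n → Bool => ∀ i, C i x = true).card
    (Finset.univ.image G).card = 2 ^ (n + m) - 2 ^ (m - 1) * M ∧
    (Function.Bijective G ↔ M = 0) := by
  intro G M
  have hcount : #(univ.image G) + 2 ^ (m - 1) * M = 2 ^ (n + m) := calc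
    _ = ∑ x, (#(univ.image (cycleMap (ZMod 2) (C · x))) +
          if ∀ i, C i x = true then 2 ^ (m - 1) else 0) := by
      rw [sum_add_distrib, ← sum_filter, sum_const, smul_eq_mul, mul_comm]
      exact congrArg (· + _) (card_image_prodMk_eq_sum fun x => cycleMap (ZMod 2) (C · x))
    _ = ∑ _x : Fin n → Bool, 2 ^ m := sum_congr rfl fun x _ => card_image_cycleMap_add_ite _
    _ = 2 ^ (n + m) := by simp [pow_add]
  have hbij : Function.Bijective G ↔ #(univ.image G) = 2 ^ (n + m) := by
    rw [← Finite.injective_iff_bijective, ← Set.injOn_univ, ← coe_univ, ← card_image_iff]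
    simp [pow_add]
  have hpow : 2 ^ (m - 1) ≠ 0 := by positivity
  refine ⟨by omega, hbij.trans ?_⟩
  rw [← mul_eq_zero_iff_left hpow]
  omega
end
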